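/- Let m, k be integers with 1 ≤ k ≤ m, let S be a nonempty subset of {1,...,k}, and let f_{(m,k)} be the associated function on 𝔽_3^m. For every v ∈ 𝔽_3^m with wt(v) = i ≥ 1, the real part of the Walsh transform of f_{(m,k)} at v equals -(3/2)·Σ_{t=1}^{k} K_t(i, m). -/

import Mathlib

/-!
Write `ζ ^ a = ψ a` with `ψ` the standard additive character of `𝔽_3`, and `f_{(m,k)} x = F (wt x)`.
The Walsh transform at `v` is then `∑_t ψ (F t) · K_t(wt v, m)`, because the Krawtchouk numbers
are the coefficients of the generating polynomial
`∑_x ψ(v·x) X^{wt x} = (1 - X)^{wt v} (1 + 2X)^{m - wt v}`, which factors over the coordinates.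
Evaluating that polynomial at `X = 1` shows `∑_t K_t(i, m) = 0` for `i ≥ 1`, so `ψ (F t)` may be
replaced by `ψ (F t) - 1`. This vanishes outside `[1, k]`, and on `[1, k]` it has real part `-3/2`
because `F t = ±1` there.
-/

open Finset

/-- `ζ = exp(2πi/3)`, a primitive cube root of unity. -/
noncomputable def zeta3 : ℂ := Complex.exp (2 * Real.pi * Complex.I / 3)

/-- The Walsh transform of `h : 𝔽_3^m → 𝔽_3` at `w ∈ 𝔽_3^m`:
`ĥ(w) = Σ_{x ∈ 𝔽_3^m} ζ^{h(x) - w·x}`. -/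
noncomputable def walsh {m : ℕ} (h : (Fin m → ZMod 3) → ZMod 3)
    (w : Fin m → ZMod 3) : ℂ :=
  ∑ x : Fin m → ZMod 3, zeta3 ^ (h x - ∑ i, w i * x i).val

/-- The function `f_{(m,k)} : 𝔽_3^m → 𝔽_3` attached to a subset `S ⊆ {1,…,k}`:
`-1` if `wt(x) ∈ S`, `1` if `wt(x) ∈ {1,…,k} \ S`, `0` otherwise. -/
def fmk {m : ℕ} (k : ℕ) (S : Finset ℕ) (x : Fin m → ZMod 3) : ZMod 3 :=
  if hammingNorm x ∈ S then -1
  else if hammingNorm x ∈ Finset.Icc 1 k then 1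
  else 0

/-- The ternary Krawtchouk polynomial
`K_t(i,m) = Σ_{j=0}^{t} (-1)^j·2^{t-j}·C(i,j)·C(m-i,t-j)`. -/
def kraw (t i m : ℕ) : ℤ :=
  ∑ j ∈ Finset.range (t + 1),
    (-1 : ℤ) ^ j * 2 ^ (t - j) * (i.choose j : ℤ) * ((m - i).choose (t - j) : ℤ)

open Polynomial

theorem AddChar.map_sum_eq_prod {ι A M : Type*} [AddCommMonoid A] [CommMonoid M]
    (ψ : AddChar A M) (s : Finset ι) (f : ι → A) : ψ (∑ i ∈ s, f i) = ∏ i ∈ s, ψ (f i) :=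
  map_prod ψ.toMonoidHom (fun i => Multiplicative.ofAdd (f i)) s

theorem Polynomial.coeff_one_add_C_mul_X_pow {R : Type*} [CommSemiring R] (a : R) (n k : ℕ) :
    ((1 + C a * X) ^ n).coeff k = a ^ k * n.choose k := by
  rw [add_comm, add_pow, finsetSum_coeff]
  have (j : ℕ) : ((C a * X) ^ j * 1 ^ (n - j) * (n.choose j : R[X])).coeff k =
      if j = k then a ^ k * n.choose k else 0 := by
    rw [one_pow, mul_one, mul_pow, ← C_pow, ← C_eq_natCast, mul_comm, ← mul_assoc, ← C_mul,
      coeff_C_mul_X_pow]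
    split_ifs with h1 h2 h2 <;> first | rfl | (subst h1; ring) | omega
  simp_rw [this, sum_ite_eq', mem_range, Nat.lt_succ_iff]
  split_ifs with h
  · rfl
  · rw [Nat.choose_eq_zero_of_lt (not_le.1 h), Nat.cast_zero, mul_zero]

theorem hammingNorm_neg {ι : Type*} [Fintype ι] {β : ι → Type*} [∀ i, AddGroup (β i)]
    [∀ i, DecidableEq (β i)] (x : ∀ i, β i) : hammingNorm (-x) = hammingNorm x :=
  hammingNorm_comp (fun _ => Neg.neg) (fun _ => neg_injective) (fun _ => neg_zero)

section GeneratingFunction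

variable {R K ι : Type*} [CommRing R] [Fintype R] [DecidableEq R] [CommRing K] [IsDomain K]
  [Fintype ι] [DecidableEq ι] {ψ : AddChar R K}

theorem sum_addChar_mul_X_pow_ite (hψ : ψ.IsPrimitive) (c : R) :
    ∑ a : R, C (ψ (a * c)) * X ^ (if a = 0 then 0 else 1) =
      if c = 0 then 1 + C ((Fintype.card R : K) - 1) * X else 1 - X := by
  have hsum := AddChar.sum_mulShift c hψ
  rw [Fintype.sum_eq_add_sum_compl 0, zero_mul, AddChar.map_zero_eq_one] at hsum
  have hcompl : ∀ a ∈ ({0}ᶜ : Finset R), C (ψ (a * c)) * X ^ (if a = 0 then 0 else 1) =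
      C (ψ (a * c)) * X := fun a ha => by
    rw [if_neg (by simpa using ha), pow_one]
  rw [Fintype.sum_eq_add_sum_compl 0, sum_congr rfl hcompl, ← sum_mul, ← map_sum,
    eq_sub_of_add_eq' hsum, if_pos rfl]
  split_ifs <;> simp [sub_eq_add_neg]

theorem sum_addChar_dotProduct_mul_X_pow_hammingNorm (hψ : ψ.IsPrimitive) (v : ι → R) :
    ∑ x : ι → R, C (ψ (v ⬝ᵥ x)) * X ^ hammingNorm x =
      (1 - X) ^ hammingNorm v *
        (1 + C ((Fintype.card R : K) - 1) * X) ^ (Fintype.card ι - hammingNorm v) := by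
  have hterm (x : ι → R) : C (ψ (v ⬝ᵥ x)) * X ^ hammingNorm x =
      ∏ j, C (ψ (x j * v j)) * X ^ (if x j = 0 then 0 else 1) := by
    rw [prod_mul_distrib, prod_pow_eq_pow_sum, sum_ite, sum_const_zero, sum_const, smul_eq_mul,
      mul_one, ← map_prod, ← AddChar.map_sum_eq_prod, dotProduct]
    simp_rw [mul_comm (v _), zero_add]
    rfl
  have hzeros : #{j | v j = 0} = Fintype.card ι - hammingNorm v := by
    have := card_filter_add_card_filter_not (s := univ) (fun j => v j = 0)
    rw [card_univ] at this
    simp only [hammingNorm, ne_eq]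
    omega
  simp only [hterm]
  rw [← Fintype.prod_sum (fun j (a : R) => C (ψ (a * v j)) * X ^ (if a = 0 then 0 else 1))]
  simp only [sum_addChar_mul_X_pow_ite hψ, prod_ite, prod_const, hzeros]
  rw [mul_comm]
  rfl

end GeneratingFunction

theorem coeff_one_sub_X_pow_mul_one_add_C_two_mul_X_pow {R : Type*} [CommRing R] (t i m : ℕ) :
    ((1 - X) ^ i * (1 + C 2 * X) ^ (m - i) : R[X]).coeff t = kraw t i m := by
  rw [show (1 - X : R[X]) = 1 + C (-1) * X by simp [sub_eq_add_neg], coeff_mul,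
    Nat.sum_antidiagonal_eq_sum_range_succ (fun a b => ((1 + C (-1) * X) ^ i : R[X]).coeff a *
      ((1 + C 2 * X) ^ (m - i) : R[X]).coeff b)]
  simp only [coeff_one_add_C_mul_X_pow, kraw]
  push_cast
  exact sum_congr rfl fun j _ => by ring

theorem sum_range_kraw_eq_zero {i m : ℕ} (hi : 0 < i) (him : i ≤ m) :
    ∑ t ∈ range (m + 1), kraw t i m = 0 := by
  have hdeg : ((1 - X) ^ i * (1 + C 2 * X) ^ (m - i) : ℤ[X]).natDegree < m + 1 := by
    apply Nat.lt_succ_of_le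
    compute_degree!
    omega
  have heval := eval_eq_sum_range' hdeg 1
  simp only [one_pow, mul_one, coeff_one_sub_X_pow_mul_one_add_C_two_mul_X_pow, eval_mul,
    eval_pow, eval_sub, eval_one, eval_X, sub_self, zero_pow hi.ne', zero_mul] at heval
  exact_mod_cast heval.symm

theorem sum_mul_addChar_dotProduct_eq_sum_kraw {K : Type*} [CommRing K] [IsDomain K] {m : ℕ}
    {ψ : AddChar (ZMod 3) K} (hψ : ψ.IsPrimitive) (h : ℕ → K) (v : Fin m → ZMod 3) :
    ∑ x : Fin m → ZMod 3, h (hammingNorm x) * ψ (v ⬝ᵥ x) =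
      ∑ t ∈ range (m + 1), h t * kraw t (hammingNorm v) m := by
  have hfiber (t : ℕ) : ∑ x with hammingNorm x = t, ψ (v ⬝ᵥ x) = kraw t (hammingNorm v) m := by
    have hcoeff := congrArg (coeff · t) (sum_addChar_dotProduct_mul_X_pow_hammingNorm hψ v)
    simp only [finsetSum_coeff, coeff_C_mul_X_pow, ZMod.card, Fintype.card_fin,
      show ((3 : ℕ) : K) - 1 = 2 by norm_num, coeff_one_sub_X_pow_mul_one_add_C_two_mul_X_pow,
      ← sum_filter, eq_comm (a := t)] at hcoeff
    exact hcoeff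
  have hmaps (x : Fin m → ZMod 3) (_ : x ∈ univ) : hammingNorm x ∈ range (m + 1) :=
    mem_range.2 (Nat.lt_succ_of_le (hammingNorm_le_card_fintype.trans (Fintype.card_fin m).le))
  rw [← sum_fiberwise_of_maps_to hmaps]
  refine sum_congr rfl fun t _ => ?_
  rw [← hfiber, mul_sum]
  exact sum_congr rfl fun x hx => by rw [(mem_filter.1 hx).2]

theorem zeta3_pow_val (a : ZMod 3) : zeta3 ^ a.val = ZMod.stdAddChar a := by
  rw [ZMod.stdAddChar_apply, ZMod.toCircle_apply, zeta3, ← Complex.exp_nat_mul]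
  push_cast
  ring_nf

theorem zeta3_re : zeta3.re = -1 / 2 := by
  rw [zeta3, show 2 * Real.pi * Complex.I / 3 = (2 * Real.pi / 3 : ℝ) * Complex.I by push_cast; ring,
    Complex.exp_ofReal_mul_I_re, show 2 * Real.pi / 3 = Real.pi - Real.pi / 3 by ring,
    Real.cos_pi_sub, Real.cos_pi_div_three]
  norm_num

theorem re_stdAddChar_of_ne_zero {a : ZMod 3} (ha : a ≠ 0) :
    (ZMod.stdAddChar a).re = -1 / 2 := by
  have hone : (ZMod.stdAddChar (1 : ZMod 3)).re = -1 / 2 := by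
    rw [← zeta3_pow_val, ZMod.val_one, pow_one, zeta3_re]
  obtain rfl | rfl : a = 1 ∨ a = -1 := by revert a; decide
  · exact hone
  · rw [AddChar.map_neg_eq_conj, Complex.conj_re, hone]

theorem walsh_eq_sum_stdAddChar {m : ℕ} (h : (Fin m → ZMod 3) → ZMod 3) (w : Fin m → ZMod 3) :
    walsh h w = ∑ x, ZMod.stdAddChar (h x) * ZMod.stdAddChar ((-w) ⬝ᵥ x) := by
  simp only [walsh, zeta3_pow_val, sub_eq_add_neg, AddChar.map_add_eq_mul, neg_dotProduct]
  rfl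

theorem walsh_comp_hammingNorm {m : ℕ} (F : ℕ → ZMod 3) (v : Fin m → ZMod 3) :
    walsh (fun x => F (hammingNorm x)) v =
      ∑ t ∈ range (m + 1), ZMod.stdAddChar (F t) * kraw t (hammingNorm v) m := by
  rw [walsh_eq_sum_stdAddChar, sum_mul_addChar_dotProduct_eq_sum_kraw
    (ZMod.isPrimitive_stdAddChar 3) (fun t => ZMod.stdAddChar (F t)), hammingNorm_neg]

theorem stmt_7 (m k : ℕ) (hkm : k ≤ m)
    (S : Finset ℕ) (hSsub : S ⊆ Finset.Icc 1 k)
    (v : Fin m → ZMod 3) (i : ℕ) (hvi : hammingNorm v = i) (hi1 : 1 ≤ i) :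
    (walsh (fmk (m := m) k S) v).re =
      -(3 / 2) * ∑ t ∈ Finset.Icc 1 k, (kraw t i m : ℝ) := by
  set F : ℕ → ZMod 3 := fun t => if t ∈ S then -1 else if t ∈ Icc 1 k then 1 else 0
  have him : i ≤ m := hvi ▸ hammingNorm_le_card_fintype.trans (Fintype.card_fin m).le
  have hF : ∀ t ∉ Icc 1 k, F t = 0 := fun t ht => by
    simp only [F, if_neg ht, if_neg (mt (@hSsub t) ht)]
  have hW : walsh (fmk k S) v = ∑ t ∈ Icc 1 k, (ZMod.stdAddChar (F t) - 1) * kraw t i m :=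
    calc walsh (fmk k S) v = ∑ t ∈ range (m + 1), ZMod.stdAddChar (F t) * kraw t i m := by
          rw [← hvi]; exact walsh_comp_hammingNorm F v
      _ = ∑ t ∈ range (m + 1), (ZMod.stdAddChar (F t) - 1) * kraw t i m := by
          simp only [sub_mul, one_mul, sum_sub_distrib, ← Int.cast_sum,
            sum_range_kraw_eq_zero hi1 him, Int.cast_zero, sub_zero]
      _ = ∑ t ∈ Icc 1 k, (ZMod.stdAddChar (F t) - 1) * kraw t i m := by
          refine (sum_subset (fun t ht => ?_) fun t _ ht => ?_).symm
          · simp only [mem_Icc, mem_range] at ht ⊢; omega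
          · rw [hF t ht, AddChar.map_zero_eq_one, sub_self, zero_mul]
  rw [hW, Complex.re_sum, mul_sum]
  refine sum_congr rfl fun t _ => ?_
  have hFt : F t ≠ 0 := by simp only [F]; split_ifs <;> decide
  rw [← Complex.ofReal_intCast, Complex.re_mul_ofReal, Complex.sub_re, Complex.one_re,
    re_stdAddChar_of_ne_zero hFt]
  ring
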